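/- Explicit oscillating solution of the regularized adhesive beam problem: Let L > 0 and ε ∈ (0,1), and define Φ_ε : ℝ → ℝ by Φ_ε(s) = ((2−ε)/2)s² for |s| ≤ 1, Φ_ε(s) = ((2−ε)/ε)((1+ε)(s−1/2) − s²/2) for 1 ≤ s ≤ 1+ε, Φ_ε(s) = ((ε−2)/ε)((1+ε)(s+1/2) + s²/2) for −1−ε ≤ s ≤ −1, and Φ_ε(s) = (2−ε)(1+ε)/2 for |s| ≥ 1+ε. Then Φ_ε is continuously differentiable with Φ_ε'(s) = (2−ε)s for |s| ≤ 1, Φ_ε'(s) = ((2−ε)/ε)(1+ε−s) for 1 ≤ s ≤ 1+ε, Φ_ε'(s) = ((ε−2)/ε)(1+ε+s) for −1−ε ≤ s ≤ −1, and Φ_ε'(s) = 0 for |s| ≥ 1+ε; and the function u_ε(t,x) = (1−ε)·cos(√(2−ε)·t) satisfies, with ρ = μ = 1: ∂²_t u_ε(t,x) = −∂⁴ₓu_ε(t,x) − Φ_ε'(u_ε(t,x)) for all t > 0 and 0 < x < L; the boundary conditions ∂²ₓu_ε(t,0) = ∂²ₓu_ε(t,L) = ∂³ₓu_ε(t,0)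 = ∂³ₓu_ε(t,L) = 0; the initial conditions u_ε(0,x) = 1−ε and ∂_t u_ε(0,x) = 0; and its energy ∫₀^L (((∂_t u_ε(t,x))² + (∂²ₓu_ε(t,x))²)/2 + Φ_ε(u_ε(t,x))) dx equals (2−ε)(1−ε)²L/2 for every t ≥ 0. -/

import Mathlib

/-!
Φ_ε is glued from five polynomial pieces on a finite closed cover of ℝ, and at each junction the
adjacent pieces agree together with their derivatives, so Φ_ε is `C¹` with derivative Φ_ε'.
Since `|1 - ε| < 1`, the spatially constant `u_ε` never leaves the well `|s| ≤ 1`, where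
`Φ_ε'(s) = (2 - ε) s`; there the beam equation reduces to the harmonic oscillator
`ü = -(2 - ε) u` with frequency `√(2 - ε)`, whose energy `(u̇² + (2 - ε) u²) / 2` is constant.
-/

open MeasureTheory Filter Set intervalIntegral Real

/-- The regularized adhesive potential `Φ_ε`. -/
noncomputable def PhiEps (ε s : ℝ) : ℝ :=
  if |s| ≤ 1 then ((2 - ε) / 2) * s ^ 2
  else if 1 ≤ s ∧ s ≤ 1 + ε then ((2 - ε) / ε) * ((1 + ε) * (s - 1 / 2) - s ^ 2 / 2)
  else if -1 - ε ≤ s ∧ s ≤ -1 then ((ε - 2) / ε) * ((1 + ε) * (s + 1 / 2) + s ^ 2 / 2)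
  else (2 - ε) * (1 + ε) / 2

/-- The derivative `Φ_ε'` of the regularized adhesive potential. -/
noncomputable def PhiEps' (ε s : ℝ) : ℝ :=
  if |s| ≤ 1 then (2 - ε) * s
  else if 1 ≤ s ∧ s ≤ 1 + ε then ((2 - ε) / ε) * (1 + ε - s)
  else if -1 - ε ≤ s ∧ s ≤ -1 then ((ε - 2) / ε) * (1 + ε + s)
  else 0

section ClosedCover

variable {𝕜 F ι : Type*} [NontriviallyNormedField 𝕜] [NormedAddCommGroup F] [NormedSpace 𝕜 F]
  [Finite ι]

theorem HasDerivWithinAt.iUnion {f : 𝕜 → F} {f' : F} {x : 𝕜} {s : ι → Set 𝕜}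
    (h : ∀ i, HasDerivWithinAt f f' (s i) x) : HasDerivWithinAt f f' (⋃ i, s i) x := by
  simp only [hasDerivWithinAt_iff_tendsto_slope, iUnion_sdiff, nhdsWithin_iUnion,
    tendsto_iSup] at *
  exact h

theorem hasDerivAt_of_isClosed_cover {f f' : 𝕜 → F} {s : ι → Set 𝕜}
    (hcov : ⋃ i, s i = univ) (hclosed : ∀ i, IsClosed (s i))
    (h : ∀ i, ∀ x ∈ s i, HasDerivWithinAt f (f' x) (s i) x) (x : 𝕜) :
    HasDerivAt f (f' x) x := by
  rw [← hasDerivWithinAt_univ, ← hcov]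
  refine HasDerivWithinAt.iUnion fun i => ?_
  by_cases hx : x ∈ s i
  · exact h i x hx
  · exact HasFDerivWithinAt.of_notMem_closure (by rwa [(hclosed i).closure_eq])

theorem hasDerivAt_and_continuous_of_isClosed_cover {f f' : 𝕜 → F} {s : ι → Set 𝕜}
    (hcov : ⋃ i, s i = univ) (hclosed : ∀ i, IsClosed (s i))
    (h : ∀ i, ∃ g g' : 𝕜 → F, (∀ x, HasDerivAt g (g' x) x) ∧ Continuous g' ∧
      ∀ x ∈ s i, f x = g x ∧ f' x = g' x) :
    (∀ x, HasDerivAt f (f' x) x) ∧ Continuous f' := by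
  choose g g' hg hg' hfg using h
  refine ⟨hasDerivAt_of_isClosed_cover hcov hclosed fun i x hx => ?_,
    (locallyFinite_of_finite s).continuous hcov hclosed fun i =>
      (hg' i).continuousOn.congr fun x hx => (hfg i x hx).2⟩
  rw [(hfg i x hx).2]
  exact (hg i x).hasDerivWithinAt.congr_of_mem (fun y hy => (hfg i y hy).1) hx

end ClosedCover

section Potential

variable {ε s : ℝ}

theorem phiEps_phiEps'_of_abs_le_one (hs : |s| ≤ 1) :
    PhiEps ε s = (2 - ε) / 2 * s ^ 2 ∧ PhiEps' ε s = (2 - ε) * s :=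
  ⟨if_pos hs, if_pos hs⟩

theorem phiEps_phiEps'_of_le_neg_one_sub (hε : 0 < ε) (hs : s ≤ -1 - ε) :
    PhiEps ε s = (2 - ε) * (1 + ε) / 2 ∧ PhiEps' ε s = 0 := by
  unfold PhiEps PhiEps'
  split_ifs with h₁ h₂ h₃
  · linarith [(abs_le.1 h₁).1]
  · linarith [h₂.1]
  · obtain rfl : s = -1 - ε := le_antisymm hs h₃.1
    constructor <;> field_simp <;> ring
  · exact ⟨rfl, rfl⟩

theorem phiEps_phiEps'_of_mem_Icc_neg (hε : 0 < ε) (hs : s ∈ Icc (-1 - ε) (-1)) :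
    PhiEps ε s = (ε - 2) / ε * ((1 + ε) * (s + 1 / 2) + s ^ 2 / 2) ∧
      PhiEps' ε s = (ε - 2) / ε * (1 + ε + s) := by
  unfold PhiEps PhiEps'
  split_ifs with h₁ h₂ h₃
  · obtain rfl : s = -1 := le_antisymm hs.2 (abs_le.1 h₁).1
    constructor <;> field_simp <;> ring
  · linarith [h₂.1, hs.2]
  · exact ⟨rfl, rfl⟩
  · exact absurd hs h₃

theorem phiEps_phiEps'_of_mem_Icc_pos (hε : 0 < ε) (hs : s ∈ Icc 1 (1 + ε)) :
    PhiEps ε s = (2 - ε) / ε * ((1 + ε) * (s - 1 / 2) - s ^ 2 / 2) ∧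
      PhiEps' ε s = (2 - ε) / ε * (1 + ε - s) := by
  unfold PhiEps PhiEps'
  split_ifs with h₁ h₂
  · obtain rfl : s = 1 := le_antisymm (abs_le.1 h₁).2 hs.1
    constructor <;> field_simp <;> ring
  · exact ⟨rfl, rfl⟩
  all_goals exact absurd hs h₂

theorem phiEps_phiEps'_of_one_add_le (hε : 0 < ε) (hs : 1 + ε ≤ s) :
    PhiEps ε s = (2 - ε) * (1 + ε) / 2 ∧ PhiEps' ε s = 0 := by
  unfold PhiEps PhiEps'
  split_ifs with h₁ h₂ h₃
  · linarith [(abs_le.1 h₁).2]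
  · obtain rfl : s = 1 + ε := le_antisymm h₂.2 hs
    constructor <;> field_simp <;> ring
  · linarith [h₃.2]
  · exact ⟨rfl, rfl⟩

theorem hasDerivAt_phiEps_and_continuous_phiEps' (hε : 0 < ε) :
    (∀ s, HasDerivAt (PhiEps ε) (PhiEps' ε s) s) ∧ Continuous (PhiEps' ε) := by
  refine hasDerivAt_and_continuous_of_isClosed_cover
    (s := ![Iic (-1 - ε), Icc (-1 - ε) (-1), Icc (-1) 1, Icc 1 (1 + ε), Ici (1 + ε)]) ?_ ?_ ?_
  · ext x
    simp only [mem_iUnion, Fin.exists_fin_succ, Matrix.cons_val_zero, Matrix.cons_val_succ,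
      Matrix.cons_val_fin_one, mem_Iic, mem_Icc, mem_Ici, mem_univ, iff_true]
    grind
  · simp [Fin.forall_fin_succ, isClosed_Iic, isClosed_Icc, isClosed_Ici]
  · intro i
    fin_cases i
    · exact ⟨fun _ => (2 - ε) * (1 + ε) / 2, fun _ => 0, fun x => hasDerivAt_const x _,
        continuous_const, fun _ hx => phiEps_phiEps'_of_le_neg_one_sub hε hx⟩
    · refine ⟨fun s => (ε - 2) / ε * ((1 + ε) * (s + 1 / 2) + s ^ 2 / 2),
        fun s => (ε - 2) / ε * (1 + ε + s), fun x => ?_, by fun_prop,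
        fun _ hx => phiEps_phiEps'_of_mem_Icc_neg hε hx⟩
      exact ((((hasDerivAt_id x).add_const (1 / 2)).const_mul (1 + ε)).add
        ((hasDerivAt_pow 2 x).div_const 2)).const_mul ((ε - 2) / ε) |>.congr_deriv (by simp)
    · refine ⟨fun s => (2 - ε) / 2 * s ^ 2, fun s => (2 - ε) * s, fun x => ?_, by fun_prop,
        fun _ hx => phiEps_phiEps'_of_abs_le_one (abs_le.2 hx)⟩
      exact ((hasDerivAt_pow 2 x).const_mul ((2 - ε) / 2)).congr_deriv (by simp; ring)
    · refine ⟨fun s => (2 - ε) / ε * ((1 + ε) * (s - 1 / 2) - s ^ 2 / 2),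
        fun s => (2 - ε) / ε * (1 + ε - s), fun x => ?_, by fun_prop,
        fun _ hx => phiEps_phiEps'_of_mem_Icc_pos hε hx⟩
      exact ((((hasDerivAt_id x).sub_const (1 / 2)).const_mul (1 + ε)).sub
        ((hasDerivAt_pow 2 x).div_const 2)).const_mul ((2 - ε) / ε) |>.congr_deriv (by simp)
    · exact ⟨fun _ => (2 - ε) * (1 + ε) / 2, fun _ => 0, fun x => hasDerivAt_const x _,
        continuous_const, fun _ hx => phiEps_phiEps'_of_one_add_le hε hx⟩

end Potential

section Oscillation

theorem hasDerivAt_const_mul_cos_mul (a ω t : ℝ) :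
    HasDerivAt (fun t => a * cos (ω * t)) (-(a * ω * sin (ω * t))) t :=
  (((hasDerivAt_id t).const_mul ω).cos.const_mul a).congr_deriv (by simp; ring)

theorem deriv_const_mul_cos_mul (a ω : ℝ) :
    deriv (fun t => a * cos (ω * t)) = fun t => -(a * ω * sin (ω * t)) :=
  funext fun t => (hasDerivAt_const_mul_cos_mul a ω t).deriv

theorem deriv_deriv_const_mul_cos_mul (a ω t : ℝ) :
    deriv (deriv fun t => a * cos (ω * t)) t = -(ω ^ 2 * (a * cos (ω * t))) := by
  rw [deriv_const_mul_cos_mul]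
  exact ((((hasDerivAt_id t).const_mul ω).sin.const_mul (a * ω)).neg.congr_deriv
    (by simp; ring)).deriv

end Oscillation

theorem oscillating_solution_regularized
    (L ε : ℝ) (hε : ε ∈ Ioo (0:ℝ) 1)
    (uε : ℝ → ℝ → ℝ)
    (huε : ∀ t x, uε t x = (1 - ε) * Real.cos (Real.sqrt (2 - ε) * t)) :
    -- Φ_ε is continuously differentiable with derivative Φ_ε'
    (∀ s, HasDerivAt (PhiEps ε) (PhiEps' ε s) s) ∧
    Continuous (PhiEps' ε) ∧
    -- the PDE ∂ₜ²u_ε = -∂ₓ⁴u_ε - Φ_ε'(u_ε) on (0,∞) × (0,L)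
    (∀ t ∈ Ioi (0:ℝ), ∀ x ∈ Ioo 0 L,
      deriv (deriv (fun τ => uε τ x)) t
        = -(iteratedDeriv 4 (fun y => uε t y) x) - PhiEps' ε (uε t x)) ∧
    -- free-end boundary conditions
    (∀ t ∈ Ioi (0:ℝ),
      iteratedDeriv 2 (fun y => uε t y) 0 = 0 ∧ iteratedDeriv 2 (fun y => uε t y) L = 0 ∧
      iteratedDeriv 3 (fun y => uε t y) 0 = 0 ∧ iteratedDeriv 3 (fun y => uε t y) L = 0) ∧
    -- initial conditions
    (∀ x ∈ Ioo 0 L, uε 0 x = 1 - ε ∧ deriv (fun τ => uε τ x) 0 = 0) ∧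
    -- constant energy
    (∀ t ∈ Ici (0:ℝ),
      (∫ x in (0:ℝ)..L,
          (((deriv (fun τ => uε τ x) t) ^ 2 + (iteratedDeriv 2 (fun y => uε t y) x) ^ 2) / 2
            + PhiEps ε (uε t x)))
        = (2 - ε) * (1 - ε) ^ 2 * L / 2) := by
  obtain ⟨hε₀, hε₁⟩ := hε
  obtain rfl : uε = fun t _ => (1 - ε) * cos (√(2 - ε) * t) := funext₂ huε
  have hω : √(2 - ε) ^ 2 = 2 - ε := sq_sqrt (by linarith)
  have hwell (t : ℝ) : |(1 - ε) * cos (√(2 - ε) * t)| ≤ 1 := by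
    rw [abs_mul, abs_of_pos (by linarith : 0 < 1 - ε)]
    nlinarith [abs_cos_le_one (√(2 - ε) * t), abs_nonneg (cos (√(2 - ε) * t))]
  obtain ⟨hΦ, hΦ'⟩ := hasDerivAt_phiEps_and_continuous_phiEps' hε₀
  refine ⟨hΦ, hΦ', fun t _ x _ => ?_, fun t _ => ?_, fun x _ => ?_, fun t _ => ?_⟩
  · rw [deriv_deriv_const_mul_cos_mul, iteratedDeriv_const,
      (phiEps_phiEps'_of_abs_le_one (hwell t)).2, hω]
    simp
  · simp [iteratedDeriv_const]
  · rw [deriv_const_mul_cos_mul]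
    simp
  · simp only [deriv_const_mul_cos_mul, iteratedDeriv_const,
      (phiEps_phiEps'_of_abs_le_one (hwell t)).1, intervalIntegral.integral_const]
    rw [if_neg two_ne_zero, smul_eq_mul]
    linear_combination L * (1 - ε) ^ 2 * sin (√(2 - ε) * t) ^ 2 / 2 * hω +
      L * (2 - ε) * (1 - ε) ^ 2 / 2 * sin_sq_add_cos_sq (√(2 - ε) * t)
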